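/- Black-boxing is functorial on steady-state relations: with F the open dynamical system (X →ⁱ S ←ᵒ Y, v), F' the open dynamical system (Y →^{i'} S' ←^{o'} Z, v'), and F'F their composite over the pushout S+_Y S' with vector field u = j_* ∘ v ∘ j^* + j'_* ∘ v' ∘ j'^*, the black-boxed relation of F'F equals the relational composite of the black-boxed relations of F' and F: ■(F'F) = ■(F') ∘ ■(F), as subsets of (ℝ^X ⊕ ℝ^X) × (ℝ^Z ⊕ ℝ^Z). -/

import Mathlib

/-
A steady state `b` of the composite restricts to steady states `b ∘ j`, `b ∘ j'` of the two
pieces as soon as some flow `M` through the shared boundary `Y` balances both halves of the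
composite equation; conversely, steady states of the pieces that agree on `Y` glue to one on the
pushout. Finding `M` is an exactness statement: if `w` on `S` and `w'` on `S'` have the same
pushforward to `P`, they are the pushforwards of a single `M` on `Y`. Since `pushR` is the
transpose of pullback, this is dual to the universal property of the pushout for real-valued
functions: a functional that vanishes on the image of `M ↦ (o_* M, -i'_* M)` glues to a
function on `P`.
-/

/-- Pushforward of real-valued functions along a map of finite sets (fiberwise sum). -/
def pushR {S S' : Type*} [Fintype S] [DecidableEq S'] (f : S → S') (c : S → ℝ) : S' → ℝ :=
  fun σ' => ∑ σ : S, if f σ = σ' then c σ else 0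

/-- A vector field on `ℝ^S` is algebraic if each component is given by a polynomial. -/
def IsAlgebraicVF {S : Type*} [Fintype S] (v : (S → ℝ) → (S → ℝ)) : Prop :=
  ∃ P : S → MvPolynomial S ℝ, ∀ c σ, v c σ = MvPolynomial.eval c (P σ)

/-- Relational composition. -/
def RelComp {α β γ : Type*} (A : Set (α × β)) (B : Set (β × γ)) : Set (α × γ) :=
  {p | ∃ b, (p.1, b) ∈ A ∧ (b, p.2) ∈ B}

/-- The black-boxed steady-state relation of an open dynamical system `(i, o, v)`:
the set of tuples `((i^*(c), I), (o^*(c), O))` with `v(c) + i_*(I) − o_*(O) = 0`. -/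
def blackbox {X Y S : Type*} [Fintype X] [Fintype Y] [Fintype S] [DecidableEq S]
    (i : X → S) (o : Y → S) (v : (S → ℝ) → (S → ℝ)) :
    Set (((X → ℝ) × (X → ℝ)) × ((Y → ℝ) × (Y → ℝ))) :=
  {p | ∃ c : S → ℝ, p.1.1 = c ∘ i ∧ p.2.1 = c ∘ o ∧
    v c + pushR i p.1.2 - pushR o p.2.2 = 0}

theorem mem_range_of_forall_dotProduct_eq_zero {K V κ : Type*} [Field K] [AddCommGroup V]
    [Module K V] [Fintype κ] [DecidableEq κ] (A : V →ₗ[K] κ → K) {u : κ → K}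
    (h : ∀ g : κ → K, (∀ x, A x ⬝ᵥ g = 0) → u ⬝ᵥ g = 0) : u ∈ LinearMap.range A := by
  rw [← Subspace.forall_mem_dualAnnihilator_apply_eq_zero_iff]
  intro φ hφ
  obtain ⟨g, rfl⟩ := (dotProductEquiv K κ).surjective φ
  rw [dotProductEquiv_apply_apply, dotProduct_comm]
  refine h g fun x => ?_
  rw [dotProduct_comm]
  exact (Submodule.mem_dualAnnihilator _).mp hφ _ (LinearMap.mem_range_self A x)

section PushR

variable {S S' S'' : Type*} [Fintype S] [DecidableEq S']

theorem pushR_add (f : S → S') (a b : S → ℝ) : pushR f (a + b) = pushR f a + pushR f b := by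
  ext σ'
  simp only [pushR, Pi.add_apply, ← Finset.sum_add_distrib, ite_add_ite, add_zero]

theorem pushR_smul (f : S → S') (r : ℝ) (a : S → ℝ) : pushR f (r • a) = r • pushR f a := by
  ext σ'
  simp only [pushR, Pi.smul_apply, smul_eq_mul, Finset.mul_sum, mul_ite, mul_zero]

def pushRLinear (f : S → S') : (S → ℝ) →ₗ[ℝ] S' → ℝ where
  toFun := pushR f
  map_add' := pushR_add f
  map_smul' := pushR_smul f

theorem pushR_sub (f : S → S') (a b : S → ℝ) : pushR f (a - b) = pushR f a - pushR f b :=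
  (pushRLinear f).map_sub a b

variable [Fintype S']

theorem pushR_dotProduct (f : S → S') (c : S → ℝ) (g : S' → ℝ) :
    pushR f c ⬝ᵥ g = c ⬝ᵥ (g ∘ f) := by
  simp only [dotProduct, pushR, Finset.sum_mul, ite_mul, zero_mul, Function.comp_apply]
  rw [Finset.sum_comm]
  simp

theorem pushR_comp [DecidableEq S''] (g : S' → S'') (f : S → S') (c : S → ℝ) :
    pushR (g ∘ f) c = pushR g (pushR f c) := by
  ext τ
  simp only [pushR, Function.comp_apply, Finset.ite_sum_zero]
  rw [Finset.sum_comm]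
  refine Finset.sum_congr rfl fun σ _ => ?_
  rw [Fintype.sum_eq_single (f σ) fun σ' h => by simp [Ne.symm h]]
  simp

end PushR

section Pushout

variable {Y S S' P : Type*} [Fintype Y] [Fintype S] [Fintype S'] [Fintype P]
  [DecidableEq S] [DecidableEq S'] [DecidableEq P]
  {o : Y → S} {i' : Y → S'} {j : S → P} {j' : S' → P}

theorem exists_pushR_eq_of_pushR_eq
    (hglue : ∀ (g : S → ℝ) (g' : S' → ℝ), g ∘ o = g' ∘ i' →
      ∃ h : P → ℝ, h ∘ j = g ∧ h ∘ j' = g')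
    {w : S → ℝ} {w' : S' → ℝ} (hw : pushR j w = pushR j' w') :
    ∃ M : Y → ℝ, pushR o M = w ∧ pushR i' M = w' := by
  let D : (Y → ℝ) →ₗ[ℝ] S ⊕ S' → ℝ :=
    (LinearEquiv.sumArrowLequivProdArrow S S' ℝ ℝ).symm.toLinearMap ∘ₗ
      (pushRLinear o).prod (-pushRLinear i')
  have hD : ∀ M, D M = Sum.elim (pushR o M) (-pushR i' M) := fun M => rfl
  obtain ⟨M, hM⟩ : Sum.elim w (-w') ∈ LinearMap.range D := by
    refine mem_range_of_forall_dotProduct_eq_zero D fun g hg => ?_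
    obtain ⟨g₁, g₂, rfl⟩ : ∃ g₁ g₂, g = Sum.elim g₁ g₂ := ⟨_, _, (Sum.elim_comp_inl_inr g).symm⟩
    have hflow : ∀ M, (g₁ ∘ o - g₂ ∘ i') ⬝ᵥ M = 0 := fun M => by
      simpa only [hD, sumElim_dotProduct_sumElim, pushR_dotProduct, neg_dotProduct,
        sub_dotProduct, ← sub_eq_add_neg, dotProduct_comm M] using hg M
    obtain ⟨h, hj, hj'⟩ := hglue g₁ g₂ (sub_eq_zero.mp (dotProduct_eq_zero _ hflow))
    rw [sumElim_dotProduct_sumElim, ← hj, ← hj', ← pushR_dotProduct, neg_dotProduct,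
      ← pushR_dotProduct, hw, add_neg_cancel]
  rw [hD, Sum.elim_eq_iff, neg_inj] at hM
  exact ⟨M, hM⟩

end Pushout

section Composite

variable {X Y Z S S' P : Type*} [Fintype X] [Fintype Y] [Fintype Z] [Fintype S] [Fintype S']
  [DecidableEq S] [DecidableEq S'] [DecidableEq P]
  {i : X → S} {o : Y → S} {i' : Y → S'} {o' : Z → S'} {j : S → P} {j' : S' → P}
  {v : (S → ℝ) → S → ℝ} {v' : (S' → ℝ) → S' → ℝ}

theorem pushR_add_pushR_add_sub_eq_zero_iff (a : S → ℝ) (a' : S' → ℝ) (I : X → ℝ) (O : Z → ℝ) :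
    pushR j a + pushR j' a' + pushR (j ∘ i) I - pushR (j' ∘ o') O = 0 ↔
      pushR j (a + pushR i I) = pushR j' (pushR o' O - a') := by
  rw [pushR_comp, pushR_comp, pushR_add, pushR_sub]
  constructor <;> intro h <;> linear_combination h

variable [Fintype P]

theorem blackbox_comp_subset_relComp (hcomm : j ∘ o = j' ∘ i')
    (hglue : ∀ (g : S → ℝ) (g' : S' → ℝ), g ∘ o = g' ∘ i' → ∃ h : P → ℝ, h ∘ j = g ∧ h ∘ j' = g') :
    blackbox (j ∘ i) (j' ∘ o') (fun b => pushR j (v (b ∘ j)) + pushR j' (v' (b ∘ j'))) ⊆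
      RelComp (blackbox i o v) (blackbox i' o' v') := by
  rintro ⟨⟨x, I⟩, z, O⟩ ⟨b, rfl, rfl, hb⟩
  rw [pushR_add_pushR_add_sub_eq_zero_iff] at hb
  obtain ⟨M, hM, hM'⟩ := exists_pushR_eq_of_pushR_eq hglue hb
  refine ⟨(b ∘ j ∘ o, M), ⟨b ∘ j, rfl, rfl, ?_⟩, ⟨b ∘ j', ?_, rfl, ?_⟩⟩
  · rw [hM, sub_self]
  · exact congrArg (b ∘ ·) hcomm
  · rw [hM']
    abel

theorem relComp_subset_blackbox_comp (hcomm : j ∘ o = j' ∘ i')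
    (hglue : ∀ (g : S → ℝ) (g' : S' → ℝ), g ∘ o = g' ∘ i' → ∃ h : P → ℝ, h ∘ j = g ∧ h ∘ j' = g') :
    RelComp (blackbox i o v) (blackbox i' o' v') ⊆
      blackbox (j ∘ i) (j' ∘ o') (fun b => pushR j (v (b ∘ j)) + pushR j' (v' (b ∘ j'))) := by
  rintro ⟨⟨x, I⟩, z, O⟩ ⟨⟨m, M⟩, ⟨c, rfl, rfl, hc⟩, ⟨c', hcc', rfl, hc'⟩⟩
  obtain ⟨b, rfl, rfl⟩ := hglue c c' hcc'
  refine ⟨b, rfl, rfl, (pushR_add_pushR_add_sub_eq_zero_iff _ _ I O).mpr ?_⟩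
  calc pushR j (v (b ∘ j) + pushR i I) = pushR j (pushR o M) := by rw [sub_eq_zero.mp hc]
    _ = pushR j' (pushR i' M) := by rw [← pushR_comp, ← pushR_comp, hcomm]
    _ = pushR j' (pushR o' O - v' (b ∘ j')) := by congr 1; linear_combination hc'

end Composite

theorem blackbox_functorial_general {X Y Z S S' P : Type*}
    [Fintype X] [Fintype Y] [Fintype Z] [Fintype S] [Fintype S'] [Fintype P]
    [DecidableEq S] [DecidableEq S'] [DecidableEq P]
    (i : X → S) (o : Y → S) (i' : Y → S') (o' : Z → S')
    (j : S → P) (j' : S' → P)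
    (hcomm : j ∘ o = j' ∘ i')
    (huniv : ∀ {W : Type} (u : S → W) (u' : S' → W), u ∘ o = u' ∘ i' →
      ∃! w : P → W, w ∘ j = u ∧ w ∘ j' = u')
    (v : (S → ℝ) → (S → ℝ)) (v' : (S' → ℝ) → (S' → ℝ)) :
    blackbox (j ∘ i) (j' ∘ o')
        (fun b => pushR j (v (b ∘ j)) + pushR j' (v' (b ∘ j')))
      = RelComp (blackbox i o v) (blackbox i' o' v') := by
  have hglue (g : S → ℝ) (g' : S' → ℝ) (h : g ∘ o = g' ∘ i') :
      ∃ w : P → ℝ, w ∘ j = g ∧ w ∘ j' = g' :=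
    (huniv g g' h).exists
  exact (blackbox_comp_subset_relComp hcomm hglue).antisymm
    (relComp_subset_blackbox_comp hcomm hglue)

/-- Black-boxing is functorial: the black-boxed relation of the composite open dynamical
system (over the pushout `P = S +_Y S'`, with vector field
`u = j_* ∘ v ∘ j^* + j'_* ∘ v' ∘ j'^*` and legs `j∘i`, `j'∘o'`) equals the relational
composite of the black-boxed relations: `■(F'F) = ■(F') ∘ ■(F)`. -/
theorem blackbox_functorial {X Y Z S S' P : Type*}
    [Fintype X] [Fintype Y] [Fintype Z] [Fintype S] [Fintype S'] [Fintype P]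
    [DecidableEq S] [DecidableEq S'] [DecidableEq P]
    (i : X → S) (o : Y → S) (i' : Y → S') (o' : Z → S')
    (j : S → P) (j' : S' → P)
    (hcomm : j ∘ o = j' ∘ i')
    (huniv : ∀ {W : Type} (u : S → W) (u' : S' → W), u ∘ o = u' ∘ i' →
      ∃! w : P → W, w ∘ j = u ∧ w ∘ j' = u')
    (v : (S → ℝ) → (S → ℝ)) (v' : (S' → ℝ) → (S' → ℝ))
    (hv : IsAlgebraicVF v) (hv' : IsAlgebraicVF v') :
    blackbox (j ∘ i) (j' ∘ o')
        (fun b => pushR j (v (b ∘ j)) + pushR j' (v' (b ∘ j')))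
      = RelComp (blackbox i o v) (blackbox i' o' v') :=
  blackbox_functorial_general i o i' o' j j' hcomm huniv v v'
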